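/- arXiv:2110.13195 — 9 statements merged into one kernel-verified Lean document; each statement's English description precedes it below -/
import Mathlib

section
/- For a non-expansive mapping T of a weak metric space (X,δ) into itself, the sequence n ↦ δ(x, Tⁿx)/n converges for every x ∈ X, and its limit does not depend on x. -/
open Filter Topology

def IsWeakMetric {X : Type*} (δ : X → X → ℝ) : Prop :=
  (∀ x, δ x x = 0) ∧ (∀ x y, 0 ≤ δ x y) ∧ (∀ x y z, δ x z ≤ δ x y + δ y z)

def IsNonexpansive {X : Type*} (δ : X → X → ℝ) (T : X → X) : Prop :=
  ∀ x y, δ (T x) (T y) ≤ δ x y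

def IsFirm {X : Type*} (δ : X → X → ℝ) (T : X → X) : Prop :=
  ∃ q r s t : X → X → ℝ,
    (∀ x y, 0 ≤ q x y) ∧ (∀ x y, 0 ≤ r x y) ∧ (∀ x y, 0 ≤ s x y) ∧ (∀ x y, 0 ≤ t x y) ∧
    (∃ α > 0, ∀ x y, α ≤ t x y) ∧
    (∀ x y, q x y + r x y + s x y + 2 * t x y ≤ 1) ∧
    (∀ x y, δ (T x) (T y) ≤ q x y * δ x y + r x y * δ x (T x) + s x y * δ y (T y)
      + t x y * (δ x (T y) + δ (T x) y))

theorem stmt0 {X : Type*} (δ : X → X → ℝ) (T : X → X)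
    (hδ : IsWeakMetric δ) (hT : IsNonexpansive δ T) :
    ∃ ρ : ℝ, ∀ x : X,
      Tendsto (fun n : ℕ => δ x (T^[n] x) / n) atTop (nhds ρ) := by
  obtain ⟨hzero, hnonneg, htri⟩ := hδ
  by_cases hX : Nonempty X
  · obtain ⟨x₀⟩ := hX
    -- iterated nonexpansiveness
    have hTn : ∀ (n : ℕ) (a b : X), δ (T^[n] a) (T^[n] b) ≤ δ a b := by
      intro n
      induction n with
      | zero => intro a b; simp
      | succ k ih =>
        intro a b
        rw [Function.iterate_succ_apply, Function.iterate_succ_apply]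
        exact ih (T a) (T b) |>.trans (hT a b) |>.trans (le_refl _) |>.trans (le_refl _)
    -- subadditivity for each x
    have hsub : ∀ x : X, Subadditive (fun n => δ x (T^[n] x)) := by
      intro x m n
      calc δ x (T^[m+n] x) ≤ δ x (T^[m] x) + δ (T^[m] x) (T^[m+n] x) := htri _ _ _
        _ ≤ δ x (T^[m] x) + δ x (T^[n] x) := by
            have : T^[m+n] x = T^[m] (T^[n] x) := by
              rw [← Function.iterate_add_apply]
            rw [this]
            exact add_le_add le_rfl (hTn m x (T^[n] x))
    have hbdd : ∀ x : X, BddBelow (Set.range fun n : ℕ => δ x (T^[n] x) / n) := by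
      intro x
      refine ⟨0, ?_⟩
      rintro r ⟨n, rfl⟩
      exact div_nonneg (hnonneg _ _) (Nat.cast_nonneg n)
    have hlim : ∀ x : X, Tendsto (fun n : ℕ => δ x (T^[n] x) / n) atTop
        (nhds ((hsub x).lim)) := fun x => (hsub x).tendsto_lim (hbdd x)
    refine ⟨(hsub x₀).lim, fun x => ?_⟩
    -- show limits coincide: difference bounded by C/n
    have hdiff : Tendsto (fun n : ℕ => δ x (T^[n] x) / n - δ x₀ (T^[n] x₀) / n) atTop
        (nhds 0) := by
      have hbound : ∀ n : ℕ, |δ x (T^[n] x) / n - δ x₀ (T^[n] x₀) / n|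
          ≤ (δ x x₀ + δ x₀ x) / n := by
        intro n
        have h1 : δ x (T^[n] x) ≤ δ x x₀ + δ x₀ x + δ x₀ (T^[n] x₀) := by
          calc δ x (T^[n] x) ≤ δ x x₀ + δ x₀ (T^[n] x) := htri _ _ _
            _ ≤ δ x x₀ + (δ x₀ (T^[n] x₀) + δ (T^[n] x₀) (T^[n] x)) :=
                add_le_add le_rfl (htri _ _ _)
            _ ≤ δ x x₀ + (δ x₀ (T^[n] x₀) + δ x₀ x) :=
                add_le_add le_rfl (add_le_add le_rfl (hTn n x₀ x))
            _ = δ x x₀ + δ x₀ x + δ x₀ (T^[n] x₀) := by ring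
        have h2 : δ x₀ (T^[n] x₀) ≤ δ x₀ x + δ x x₀ + δ x (T^[n] x) := by
          calc δ x₀ (T^[n] x₀) ≤ δ x₀ x + δ x (T^[n] x₀) := htri _ _ _
            _ ≤ δ x₀ x + (δ x (T^[n] x) + δ (T^[n] x) (T^[n] x₀)) :=
                add_le_add le_rfl (htri _ _ _)
            _ ≤ δ x₀ x + (δ x (T^[n] x) + δ x x₀) :=
                add_le_add le_rfl (add_le_add le_rfl (hTn n x x₀))
            _ = δ x₀ x + δ x x₀ + δ x (T^[n] x) := by ring
        rcases Nat.eq_zero_or_pos n with rfl | hn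
        · simp
        have hn' : (0:ℝ) < n := by exact_mod_cast hn
        rw [div_sub_div_same, abs_div, abs_of_pos hn']
        exact div_le_div_of_nonneg_right (abs_le.2 ⟨by linarith, by linarith⟩) hn'.le
      exact squeeze_zero_norm hbound (tendsto_const_div_atTop_nhds_zero_nat _)
    have := (hlim x₀).add hdiff
    simp only [add_zero] at this
    have h2 : Tendsto (fun n : ℕ => δ x (T^[n] x) / n) atTop (nhds ((hsub x₀).lim)) := by
      have heq : (fun n : ℕ => δ x (T^[n] x) / n)
          = fun n : ℕ => δ x₀ (T^[n] x₀) / n + (δ x (T^[n] x) / n - δ x₀ (T^[n] x₀) / n) := by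
        funext n; ring
      rw [heq]
      simpa using (hlim x₀).add hdiff
    exact h2
  · exact ⟨0, fun x => absurd ⟨x⟩ hX⟩
end

section
/- Every firmly non-expansive mapping of a Banach space is firm: if T : V → V satisfies ‖Tx−Ty‖ ≤ ‖(1−λ)(Tx−Ty) + λ(x−y)‖ for all x,y ∈ V and all λ ∈ (0,1], then for every fixed λ ∈ (0,1) and all x,y ∈ V, ‖Tx−Ty‖ ≤ (λ/(2−λ))‖x−y‖ + ((1−λ)/(2−λ))(‖x−Ty‖ + ‖Tx−y‖). -/
theorem stmt5 {V : Type*} [NormedAddCommGroup V] [NormedSpace ℝ V] (T : V → V)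
    (hT : ∀ x y : V, ∀ l : ℝ, 0 < l → l ≤ 1 →
      ‖T x - T y‖ ≤ ‖(1 - l) • (T x - T y) + l • (x - y)‖)
    (l : ℝ) (hl0 : 0 < l) (hl1 : l < 1) :
    ∀ x y : V, ‖T x - T y‖ ≤ (l / (2 - l)) * ‖x - y‖
      + ((1 - l) / (2 - l)) * (‖x - T y‖ + ‖T x - y‖) := by
  intro x y
  have h2 : (0:ℝ) < 2 - l := by linarith
  have hμ0 : (0:ℝ) < 1 / (2 - l) := by positivity
  have hμ1 : 1 / (2 - l) ≤ 1 := by rw [div_le_one h2]; linarith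
  have key : (1 - 1 / (2 - l)) • (T x - T y) + (1 / (2 - l)) • (x - y)
      = (l / (2 - l)) • (x - y) + ((1 - l) / (2 - l)) • ((x - T y) + (T x - y)) := by
    have hne : (2 - l) ≠ 0 := ne_of_gt h2
    match_scalars <;> field_simp <;> ring
  calc ‖T x - T y‖ ≤ ‖(1 - 1 / (2 - l)) • (T x - T y) + (1 / (2 - l)) • (x - y)‖ :=
        hT x y _ hμ0 hμ1
    _ = ‖(l / (2 - l)) • (x - y) + ((1 - l) / (2 - l)) • ((x - T y) + (T x - y))‖ := by
        rw [key]
    _ ≤ ‖(l / (2 - l)) • (x - y)‖ + ‖((1 - l) / (2 - l)) • ((x - T y) + (T x - y))‖ :=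
        norm_add_le _ _
    _ ≤ (l / (2 - l)) * ‖x - y‖ + ((1 - l) / (2 - l)) * (‖x - T y‖ + ‖T x - y‖) := by
        rw [norm_smul, norm_smul]
        have h1 : |l / (2 - l)| = l / (2 - l) := abs_of_pos (by positivity)
        have h2' : |(1 - l) / (2 - l)| = (1 - l) / (2 - l) := abs_of_pos (div_pos (by linarith) h2)
        rw [Real.norm_eq_abs, Real.norm_eq_abs, h1, h2']
        gcongr
        · exact norm_add_le _ _
end

section
/- The mapping T : ℝ → ℝ defined by Tx = |x| + 1 is firm non-expansive with respect to the usual metric on ℝ: it is non-expansive, and there exist functions q, r, s, t : ℝ×ℝ → [0,∞) with inf t > 0, sup(q + r + s + 2t) ≤ 1, and |Tx − Ty| ≤ q(x,y)|x−y| + r(x,y)|x−Tx| + s(x,y)|y−Ty| + t(x,y)(|x−Ty| + |Tx−y|) for all x,y. -/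
open Filter Topology

/-! With `q = r = s = 0` and `t = 1/2`, firmness of `x ↦ |x| + c` (`c ≥ 0`) reduces to
`2 ||x| - |y|| ≤ |x - (|y| + c)| + |(|x| + c) - y|`. By the reverse triangle inequality the right side
is at least `|a - c| + |a + c|` with `a = |x| - |y|`, and this dominates `|2a|`. -/

theorem isFirm_of_le_half_cross {X : Type*} (δ : X → X → ℝ) (T : X → X)
    (h : ∀ x y, δ (T x) (T y) ≤ (δ x (T y) + δ (T x) y) / 2) : IsFirm δ T := by
  refine ⟨0, 0, 0, fun _ _ => 1 / 2, fun _ _ => le_rfl, fun _ _ => le_rfl, fun _ _ => le_rfl,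
    fun _ _ => by norm_num, ⟨1 / 2, by norm_num, fun _ _ => le_rfl⟩, fun _ _ => by norm_num,
    fun x y => ?_⟩
  simpa [div_eq_inv_mul] using h x y

theorem isNonexpansive_abs_add (c : ℝ) :
    IsNonexpansive (fun x y : ℝ => |x - y|) (fun x => |x| + c) := fun x y => by
  simpa only [add_sub_add_right_eq_sub] using abs_abs_sub_abs_le_abs_sub x y

theorem two_mul_abs_le_abs_sub_add_abs_add (a c : ℝ) : 2 * |a| ≤ |a - c| + |a + c| :=
  calc 2 * |a| = |(a - c) + (a + c)| := by rw [← abs_two, ← abs_mul]; ring_nf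
    _ ≤ |a - c| + |a + c| := abs_add_le _ _

theorem abs_sub_abs_le_half_cross {c : ℝ} (hc : 0 ≤ c) (x y : ℝ) :
    |(|x| + c) - (|y| + c)| ≤ (|x - (|y| + c)| + |(|x| + c) - y|) / 2 := by
  have h₁ : |(|x| - |y|) - c| ≤ |x - (|y| + c)| := by
    simpa only [abs_of_nonneg (by positivity : 0 ≤ |y| + c), sub_sub]
      using abs_abs_sub_abs_le_abs_sub x (|y| + c)
  have h₂ : |(|x| - |y|) + c| ≤ |(|x| + c) - y| := by
    simpa only [abs_of_nonneg (by positivity : 0 ≤ |x| + c), sub_add_eq_add_sub]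
      using abs_abs_sub_abs_le_abs_sub (|x| + c) y
  rw [add_sub_add_right_eq_sub]
  linarith [two_mul_abs_le_abs_sub_add_abs_add (|x| - |y|) c]

theorem isFirm_abs_add {c : ℝ} (hc : 0 ≤ c) :
    IsFirm (fun x y : ℝ => |x - y|) (fun x => |x| + c) :=
  isFirm_of_le_half_cross _ _ (abs_sub_abs_le_half_cross hc)

theorem stmt7 (T : ℝ → ℝ) (hT : ∀ x : ℝ, T x = |x| + 1) :
    IsNonexpansive (fun x y : ℝ => |x - y|) T ∧ IsFirm (fun x y : ℝ => |x - y|) T := by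
  obtain rfl : T = fun x => |x| + 1 := funext hT
  exact ⟨isNonexpansive_abs_add 1, isFirm_abs_add zero_le_one⟩
end

section
/- The mapping T : ℝ → ℝ given by Tx = −x+1 for x < 0 and Tx = x + e^{−x} for x ≥ 0 satisfies, for all x, y ∈ ℝ, the inequality |Tx − Ty| ≤ (1/2)(|x − Ty| + |Tx − y|), and is non-expansive; hence T is firm non-expansive (with q = r = s = 0 and t = 1/2). -/
/-!
On `[0, ∞)` the map is `x ↦ x + exp (-x)`, whose slope `1 - exp (-x)` lies in `[0, 1)`, so there
it is monotone and non-expansive; for such pairs `2 |Tx - Ty| ≤ (x - Ty) + (Tx - y)`. On `(-∞, 0)`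
it is the reflection `x ↦ 1 - x`, where `|x - Ty| = |Tx - y| = 1 - x - y` dominates `|x - y|`.
Pairs straddling `0` are settled by `1 - t ≤ exp (-t) ≤ 1` for `t ≥ 0`. The firmness constants
are then `q = r = s = 0`, `t = 1/2`.
-/

open Filter Topology

theorem isFirm_of_le_half {X : Type*} {δ : X → X → ℝ} {T : X → X}
    (h : ∀ x y, δ (T x) (T y) ≤ 1 / 2 * (δ x (T y) + δ (T x) y)) : IsFirm δ T :=
  ⟨fun _ _ => 0, fun _ _ => 0, fun _ _ => 0, fun _ _ => 1 / 2,
    fun _ _ => le_rfl, fun _ _ => le_rfl, fun _ _ => le_rfl, fun _ _ => by norm_num,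
    ⟨1 / 2, by norm_num, fun _ _ => le_rfl⟩, fun _ _ => by norm_num,
    fun x y => by simpa using h x y⟩

namespace Real

theorem exp_neg_sub_exp_neg_le {x y : ℝ} (hy : 0 ≤ y) (hyx : y ≤ x) :
    exp (-y) - exp (-x) ≤ x - y := by
  have h₁ : exp (-y) ≤ 1 := exp_le_one_iff.mpr (by linarith)
  have h₂ := one_sub_le_exp_neg (x - y)
  have h₃ : exp (-x) = exp (-y) * exp (-(x - y)) := by rw [← exp_add]; ring_nf
  nlinarith [exp_pos (-y)]

end Real

open Real

noncomputable def kinkMap (x : ℝ) : ℝ := if x < 0 then -x + 1 else x + Real.exp (-x)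

theorem kinkMap_of_neg {x : ℝ} (hx : x < 0) : kinkMap x = 1 - x := by
  rw [kinkMap, if_pos hx]; ring

theorem kinkMap_of_nonneg {x : ℝ} (hx : 0 ≤ x) : kinkMap x = x + exp (-x) := by
  rw [kinkMap, if_neg hx.not_gt]

theorem kinkMap_sub_mem_Icc_of_nonneg {x y : ℝ} (hy : 0 ≤ y) (hyx : y ≤ x) :
    kinkMap x - kinkMap y ∈ Set.Icc 0 (x - y) := by
  rw [kinkMap_of_nonneg hy, kinkMap_of_nonneg (hy.trans hyx)]
  have := exp_le_exp.mpr (neg_le_neg hyx)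
  constructor <;> linarith [exp_neg_sub_exp_neg_le hy hyx]

theorem two_mul_abs_kinkMap_sub_le (x y : ℝ) :
    2 * |kinkMap x - kinkMap y| ≤ |x - kinkMap y| + |kinkMap x - y| := by
  wlog hyx : y ≤ x generalizing x y
  · linarith [this y x (le_of_not_ge hyx), abs_sub_comm (kinkMap x) (kinkMap y),
      abs_sub_comm x (kinkMap y), abs_sub_comm (kinkMap x) y]
  rcases lt_or_ge x 0 with hx | hx
  · rw [kinkMap_of_neg hx, kinkMap_of_neg (hyx.trans_lt hx),
      abs_of_nonpos (by linarith : 1 - x - (1 - y) ≤ 0)]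
    linarith [neg_abs_le (x - (1 - y)), le_abs_self (1 - x - y)]
  rcases le_or_gt 0 y with hy | hy
  · obtain ⟨h₀, h₁⟩ := kinkMap_sub_mem_Icc_of_nonneg hy hyx
    rw [abs_of_nonneg h₀]
    linarith [le_abs_self (x - kinkMap y), le_abs_self (kinkMap x - y)]
  · rw [kinkMap_of_nonneg hx, kinkMap_of_neg hy]
    have h₁ : exp (-x) ≤ 1 := exp_le_one_iff.mpr (by linarith)
    have h₂ := one_sub_le_exp_neg x
    have h₃ := exp_pos (-x)
    rcases abs_cases (x + exp (-x) - (1 - y)) with ⟨e, _⟩ | ⟨e, _⟩ <;> rw [e] <;>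
    linarith [le_abs_self (x - (1 - y)), neg_abs_le (x - (1 - y)), le_abs_self (x + exp (-x) - y)]

theorem abs_kinkMap_sub_le (x y : ℝ) : |kinkMap x - kinkMap y| ≤ |x - y| := by
  wlog hyx : y ≤ x generalizing x y
  · rw [abs_sub_comm, abs_sub_comm x]; exact this y x (by linarith)
  rw [abs_of_nonneg (sub_nonneg.mpr hyx)]
  rcases lt_or_ge x 0 with hx | hx
  · rw [kinkMap_of_neg hx, kinkMap_of_neg (hyx.trans_lt hx), abs_le]
    constructor <;> linarith
  rcases le_or_gt 0 y with hy | hy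
  · obtain ⟨h₀, h₁⟩ := kinkMap_sub_mem_Icc_of_nonneg hy hyx
    rwa [abs_of_nonneg h₀]
  · rw [kinkMap_of_nonneg hx, kinkMap_of_neg hy, abs_le]
    have h₁ : exp (-x) ≤ 1 := exp_le_one_iff.mpr (by linarith)
    have h₂ := one_sub_le_exp_neg x
    constructor <;> linarith

theorem stmt8 (T : ℝ → ℝ)
    (hT : ∀ x : ℝ, T x = if x < 0 then -x + 1 else x + Real.exp (-x)) :
    (∀ x y : ℝ, |T x - T y| ≤ (1 / 2) * (|x - T y| + |T x - y|)) ∧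
    IsNonexpansive (fun x y : ℝ => |x - y|) T ∧
    IsFirm (fun x y : ℝ => |x - y|) T := by
  obtain rfl : T = kinkMap := funext hT
  have half (x y : ℝ) :
      |kinkMap x - kinkMap y| ≤ 1 / 2 * (|x - kinkMap y| + |kinkMap x - y|) := by
    linarith [two_mul_abs_kinkMap_sub_le x y]
  exact ⟨half, abs_kinkMap_sub_le, isFirm_of_le_half half⟩
end

section
/- Main theorem: Let T be a firm non-expansive mapping of a weak metric space (X,δ) into itself. Then for every x ∈ X and every integer k ≥ 1, inf_{w∈X} δ(w,Tw) = lim_{n→∞} δ(x,Tⁿx)/n = lim_{n→∞} δ(Tⁿx,T^{n+1}x) = (1/k)·lim_{n→∞} δ(Tⁿx,T^{n+k}x). -/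
open Filter Topology

section Aux

variable {X : Type*} (δ : X → X → ℝ) (T : X → X) (x : X)

lemma iterNonexp (hT : IsNonexpansive δ T) (n : ℕ) (w y : X) :
    δ (T^[n] w) (T^[n] y) ≤ δ w y := by
  induction n with
  | zero => simp
  | succ n ih =>
    rw [Function.iterate_succ_apply', Function.iterate_succ_apply']
    exact (hT _ _).trans ih

lemma pathBound (hδ : IsWeakMetric δ) (hT : IsNonexpansive δ T) (w : X) (p : ℕ) :
    δ w (T^[p] w) ≤ p * δ w (T w) := by
  obtain ⟨h0, hnn, htri⟩ := id hδ
  induction p with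
  | zero => simp [h0 w]
  | succ p ih =>
    have h1 : δ (T^[p] w) (T (T^[p] w)) ≤ δ w (T w) := by
      calc δ (T^[p] w) (T (T^[p] w)) = δ (T^[p] w) (T^[p] (T w)) := by
            rw [← Function.iterate_succ_apply, Function.iterate_succ_apply']
        _ ≤ δ w (T w) := iterNonexp δ T hT p w (T w)
    calc δ w (T^[p+1] w) ≤ δ w (T^[p] w) + δ (T^[p] w) (T^[p+1] w) := htri _ _ _
      _ = δ w (T^[p] w) + δ (T^[p] w) (T (T^[p] w)) := by rw [Function.iterate_succ_apply']
      _ ≤ p * δ w (T w) + δ w (T w) := add_le_add ih h1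
      _ = (p+1 : ℕ) * δ w (T w) := by push_cast; ring

noncomputable def Dseq (j n : ℕ) : ℝ := δ (T^[n] x) (T^[n + j] x)

noncomputable def sig (j : ℕ) : ℝ := ⨅ n, Dseq δ T x j n

lemma Dseq_nonneg (hδ : IsWeakMetric δ) (j n : ℕ) : 0 ≤ Dseq δ T x j n := hδ.2.1 _ _

lemma Dseq_anti (hT : IsNonexpansive δ T) (j : ℕ) : Antitone fun n => Dseq δ T x j n := by
  apply antitone_nat_of_succ_le
  intro n
  have h1 : T^[n+1] x = T (T^[n] x) := Function.iterate_succ_apply' T n x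
  have h2 : T^[n+1+j] x = T (T^[n+j] x) := by
    rw [show n+1+j = (n+j)+1 by omega, Function.iterate_succ_apply']
  show δ (T^[n+1] x) (T^[n+1+j] x) ≤ δ (T^[n] x) (T^[n+j] x)
  rw [h1, h2]; exact hT _ _

lemma Dseq_bdd (hδ : IsWeakMetric δ) (j : ℕ) :
    BddBelow (Set.range fun n => Dseq δ T x j n) := by
  refine ⟨0, ?_⟩
  rintro y ⟨n, rfl⟩
  exact Dseq_nonneg δ T x hδ j n

lemma tendsto_sig (hδ : IsWeakMetric δ) (hT : IsNonexpansive δ T) (j : ℕ) :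
    Tendsto (fun n => Dseq δ T x j n) atTop (𝓝 (sig δ T x j)) :=
  tendsto_atTop_ciInf (Dseq_anti δ T x hT j) (Dseq_bdd δ T x hδ j)

lemma sig_le (hδ : IsWeakMetric δ) (j n : ℕ) : sig δ T x j ≤ Dseq δ T x j n :=
  ciInf_le (Dseq_bdd δ T x hδ j) n

lemma sig_nonneg (hδ : IsWeakMetric δ) (j : ℕ) : 0 ≤ sig δ T x j :=
  le_ciInf fun n => Dseq_nonneg δ T x hδ j n

lemma sig_eq (hδ : IsWeakMetric δ) (hT : IsNonexpansive δ T) (hF : IsFirm δ T) :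
    ∀ j : ℕ, sig δ T x j = (j : ℝ) * sig δ T x 1 := by
  obtain ⟨h0, hnn, htri⟩ := id hδ
  obtain ⟨q, r, s, t, hq, hr, hs, ht, ⟨α, hα, hαt⟩, hsum, hfirm⟩ := hF
  set σ1 := sig δ T x 1 with hs1
  have hσ1nn : 0 ≤ σ1 := sig_nonneg δ T x hδ 1
  suffices h : ∀ j : ℕ, sig δ T x j = (j:ℝ) * σ1 ∧ sig δ T x (j+1) = ((j:ℝ)+1) * σ1 by
    intro j; exact (h j).1
  intro j
  induction j with
  | zero =>
    constructor
    · have hz : ∀ n, Dseq δ T x 0 n = 0 := fun n => h0 _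
      have : (⨅ n, Dseq δ T x 0 n) = 0 := by
        rw [show (fun n => Dseq δ T x 0 n) = fun _ : ℕ => (0:ℝ) from funext hz]
        exact ciInf_const
      simpa [sig] using this
    · norm_num; exact hs1.symm
  | succ j ih =>
    refine ⟨by push_cast [ih.2]; ring, ?_⟩
    -- goal : sig δ T x (j+2) = ((j:ℝ)+2) * σ1 (up to casts)
    have hub : sig δ T x (j+1+1) ≤ (((j:ℝ)+1)+1) * σ1 := by
      have hpt : ∀ n, Dseq δ T x (j+2) n ≤ Dseq δ T x (j+1) n + Dseq δ T x 1 (n+(j+1)) := by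
        intro n
        have e1 : Dseq δ T x 1 (n+(j+1)) = δ (T^[n+(j+1)] x) (T^[n+(j+2)] x) := by
          show δ _ (T^[n+(j+1)+1] x) = _
          rw [show n+(j+1)+1 = n+(j+2) by omega]
        have := htri (T^[n] x) (T^[n+(j+1)] x) (T^[n+(j+2)] x)
        show δ (T^[n] x) (T^[n+(j+2)] x) ≤ _
        rw [e1]; exact this
      have hrhs : Tendsto (fun n => Dseq δ T x (j+1) n + Dseq δ T x 1 (n+(j+1)))
          atTop (𝓝 (sig δ T x (j+1) + σ1)) := by
        refine (tendsto_sig δ T x hδ hT (j+1)).add ?_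
        have := (tendsto_sig δ T x hδ hT 1).comp (tendsto_add_atTop_nat (j+1))
        simpa [Function.comp_def] using this
      have := le_of_tendsto_of_tendsto' (tendsto_sig δ T x hδ hT (j+2)) hrhs hpt
      calc sig δ T x (j+1+1) ≤ sig δ T x (j+1) + σ1 := this
        _ = (((j:ℝ)+1)+1) * σ1 := by rw [ih.2]; ring
    have hlb : (((j:ℝ)+1)+1) * σ1 ≤ sig δ T x (j+1+1) := by
      set η : ℕ → ℝ := fun n =>
        (Dseq δ T x (j+1) n - ((j:ℝ)+1)*σ1) + (Dseq δ T x 1 n - σ1)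
        + (Dseq δ T x 1 (n+(j+1)) - σ1) + (Dseq δ T x j (n+1) - (j:ℝ)*σ1) with hηdef
      have hηnn : ∀ n, 0 ≤ η n := by
        intro n
        have h1 := sig_le δ T x hδ (j+1) n
        have h2 := sig_le δ T x hδ 1 n
        have h3 := sig_le δ T x hδ 1 (n+(j+1))
        have h4 := sig_le δ T x hδ j (n+1)
        rw [ih.2] at h1
        rw [ih.1] at h4
        simp only [hηdef]
        push_cast at h1 h4 ⊢
        linarith
      have hη0 : Tendsto η atTop (𝓝 0) := by
        have t1 : Tendsto (fun n => Dseq δ T x (j+1) n - ((j:ℝ)+1)*σ1) atTop (𝓝 0) := by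
          have := (tendsto_sig δ T x hδ hT (j+1)).sub_const (((j:ℝ)+1)*σ1)
          rw [ih.2] at this
          simpa using this
        have t2 : Tendsto (fun n => Dseq δ T x 1 n - σ1) atTop (𝓝 0) := by
          have := (tendsto_sig δ T x hδ hT 1).sub_const σ1
          simpa [← hs1] using this
        have t3 : Tendsto (fun n => Dseq δ T x 1 (n+(j+1)) - σ1) atTop (𝓝 0) := by
          have := ((tendsto_sig δ T x hδ hT 1).comp (tendsto_add_atTop_nat (j+1))).sub_const σ1
          simpa [Function.comp_def, ← hs1] using this
        have t4 : Tendsto (fun n => Dseq δ T x j (n+1) - (j:ℝ)*σ1) atTop (𝓝 0) := by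
          have := ((tendsto_sig δ T x hδ hT j).comp (tendsto_add_atTop_nat 1)).sub_const ((j:ℝ)*σ1)
          rw [ih.1] at this
          simpa [Function.comp_def] using this
        have := ((t1.add t2).add t3).add t4
        simpa using this
      have hpt : ∀ n, (((j:ℝ)+1)+1) * σ1 - η n / α ≤ Dseq δ T x (j+2) n := by
        intro n
        set u := T^[n] x with hu
        set v := T^[n+(j+1)] x with hv
        have hf := hfirm u v
        have hTu : T u = T^[n+1] x := (Function.iterate_succ_apply' T n x).symm
        have hTv : T v = T^[n+(j+2)] x := by
          rw [hv, show n+(j+2) = (n+(j+1))+1 by omega]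
          exact (Function.iterate_succ_apply' T (n+(j+1)) x).symm
        rw [hTu, hTv] at hf
        -- identify as Dseq values
        have eG : δ (T^[n+1] x) (T^[n+(j+2)] x) = Dseq δ T x (j+1) (n+1) := by
          show _ = δ (T^[n+1] x) (T^[(n+1)+(j+1)] x)
          rw [show (n+1)+(j+1) = n+(j+2) by omega]
        have eA : δ u v = Dseq δ T x (j+1) n := rfl
        have eB : δ u (T^[n+1] x) = Dseq δ T x 1 n := rfl
        have eC : δ v (T^[n+(j+2)] x) = Dseq δ T x 1 (n+(j+1)) := by
          show _ = δ (T^[n+(j+1)] x) (T^[(n+(j+1))+1] x)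
          rw [show (n+(j+1))+1 = n+(j+2) by omega]
        have eF : δ u (T^[n+(j+2)] x) = Dseq δ T x (j+2) n := rfl
        have eE : δ (T^[n+1] x) v = Dseq δ T x j (n+1) := by
          show _ = δ (T^[n+1] x) (T^[(n+1)+j] x)
          rw [show (n+1)+j = n+(j+1) by omega]
        rw [eG, eA, eB, eC, eF, eE] at hf
        set A := Dseq δ T x (j+1) n
        set B := Dseq δ T x 1 n
        set C := Dseq δ T x 1 (n+(j+1))
        set E := Dseq δ T x j (n+1)
        set F := Dseq δ T x (j+2) n
        set G := Dseq δ T x (j+1) (n+1)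
        set q' := q u v
        set r' := r u v
        set s' := s u v
        set t' := t u v
        have hq' : 0 ≤ q' := hq u v
        have hr' : 0 ≤ r' := hr u v
        have hs' : 0 ≤ s' := hs u v
        have ht' : 0 ≤ t' := ht u v
        have hαt' : α ≤ t' := hαt u v
        have hsum' : q' + r' + s' + 2*t' ≤ 1 := hsum u v
        have hG : ((j:ℝ)+1) * σ1 ≤ G := by
          have := sig_le δ T x hδ (j+1) (n+1)
          rw [ih.2] at this; push_cast at this ⊢; linarith
        have hA : ((j:ℝ)+1) * σ1 ≤ A := by
          have := sig_le δ T x hδ (j+1) n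
          rw [ih.2] at this; push_cast at this ⊢; linarith
        have hB : σ1 ≤ B := sig_le δ T x hδ 1 n
        have hC : σ1 ≤ C := sig_le δ T x hδ 1 (n+(j+1))
        have hE : (j:ℝ) * σ1 ≤ E := by
          have := sig_le δ T x hδ j (n+1)
          rw [ih.1] at this; linarith
        have hηn : η n = (A - ((j:ℝ)+1)*σ1) + (B - σ1) + (C - σ1) + (E - (j:ℝ)*σ1) := rfl
        have hq1 : q' ≤ 1 := by linarith
        have hr1 : r' ≤ 1 := by linarith
        have hs1' : s' ≤ 1 := by linarith
        have ht1 : t' ≤ 1 := by linarith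
        have f1 : q' * (A - ((j:ℝ)+1)*σ1) ≤ A - ((j:ℝ)+1)*σ1 :=
          mul_le_of_le_one_left (by linarith) hq1
        have f2 : r' * (B - σ1) ≤ B - σ1 := mul_le_of_le_one_left (by linarith) hr1
        have f3 : s' * (C - σ1) ≤ C - σ1 := mul_le_of_le_one_left (by linarith) hs1'
        have f4 : t' * (E - (j:ℝ)*σ1) ≤ E - (j:ℝ)*σ1 := mul_le_of_le_one_left (by linarith) ht1
        have f5 : 0 ≤ σ1 * (((j:ℝ)+1) * (1 - 2*t' - q' - r' - s')) := by
          apply mul_nonneg hσ1nn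
          apply mul_nonneg (by positivity)
          linarith
        have f6 : 0 ≤ σ1 * ((j:ℝ) * (r' + s')) := by
          apply mul_nonneg hσ1nn
          apply mul_nonneg (by positivity)
          linarith
        have key : t' * ((((j:ℝ)+1)+1)*σ1 - F) ≤ η n := by
          rw [hηn]
          linarith [hf, hG, f1, f2, f3, f4, f5, f6]
        rcases le_or_gt ((((j:ℝ)+1)+1)*σ1 - F) 0 with hcase | hcase
        · have : 0 ≤ η n / α := div_nonneg (hηnn n) hα.le
          linarith
        · have h1 : α * ((((j:ℝ)+1)+1)*σ1 - F) ≤ η n := by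
            have := mul_le_mul_of_nonneg_right hαt' hcase.le
            linarith
          have h2 : (((j:ℝ)+1)+1)*σ1 - F ≤ η n / α := by
            rw [le_div_iff₀ hα]
            linarith
          linarith
      have hlhs : Tendsto (fun n => (((j:ℝ)+1)+1) * σ1 - η n / α) atTop
          (𝓝 ((((j:ℝ)+1)+1) * σ1)) := by
        have h := hη0.div_const α
        have := (tendsto_const_nhds : Tendsto (fun _ : ℕ => (((j:ℝ)+1)+1) * σ1) atTop
          (𝓝 ((((j:ℝ)+1)+1) * σ1))).sub h
        simpa using this
      exact le_of_tendsto_of_tendsto' hlhs (tendsto_sig δ T x hδ hT (j+2)) hpt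
    have : sig δ T x (j+1+1) = (((j:ℝ)+1)+1) * σ1 := le_antisymm hub hlb
    rw [this]; push_cast; ring

end Aux

theorem stmt9 {X : Type*} (δ : X → X → ℝ) (T : X → X)
    (hδ : IsWeakMetric δ) (hT : IsNonexpansive δ T) (hF : IsFirm δ T)
    (x : X) (k : ℕ) (hk : 1 ≤ k) (ρ σ1 σk : ℝ)
    (hρ : Tendsto (fun n : ℕ => δ x (T^[n] x) / n) atTop (nhds ρ))
    (hσ1 : Tendsto (fun n : ℕ => δ (T^[n] x) (T^[n + 1] x)) atTop (nhds σ1))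
    (hσk : Tendsto (fun n : ℕ => δ (T^[n] x) (T^[n + k] x)) atTop (nhds σk)) :
    sInf {d : ℝ | ∃ w : X, d = δ w (T w)} = ρ ∧ ρ = σ1 ∧ σ1 = σk / k := by
  obtain ⟨h0, hnn, htri⟩ := id hδ
  have hσ1' : Tendsto (fun n => Dseq δ T x 1 n) atTop (𝓝 σ1) := hσ1
  have hσk' : Tendsto (fun n => Dseq δ T x k n) atTop (𝓝 σk) := hσk
  have hsig1 : sig δ T x 1 = σ1 := tendsto_nhds_unique (tendsto_sig δ T x hδ hT 1) hσ1'
  have hsigk : sig δ T x k = σk := tendsto_nhds_unique (tendsto_sig δ T x hδ hT k) hσk'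
  have hkey := sig_eq δ T x hδ hT hF
  have hσ1nn : 0 ≤ σ1 := by rw [← hsig1]; exact sig_nonneg δ T x hδ 1
  -- σk = k * σ1
  have hσkval : σk = (k:ℝ) * σ1 := by rw [← hsigk, hkey k, hsig1]
  have hkne : (k:ℝ) ≠ 0 := by
    have : (0:ℕ) < k := hk
    exact_mod_cast this.ne'
  -- ρ ≥ σ1
  have hρge : σ1 ≤ ρ := by
    refine ge_of_tendsto hρ ?_
    filter_upwards [eventually_ge_atTop 1] with n hn
    have hn' : (0:ℝ) < n := by exact_mod_cast hn
    rw [le_div_iff₀ hn']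
    have h1 : sig δ T x n ≤ Dseq δ T x n 0 := sig_le δ T x hδ n 0
    have h2 : Dseq δ T x n 0 = δ x (T^[n] x) := by simp [Dseq]
    have h3 : sig δ T x n = (n:ℝ) * σ1 := by rw [hkey n, hsig1]
    rw [h2, h3] at h1
    linarith
  -- ρ ≤ σ1
  have hρle : ρ ≤ σ1 := by
    rw [← hsig1]
    show ρ ≤ ⨅ n, Dseq δ T x 1 n
    refine le_ciInf fun m => ?_
    have hc : Tendsto (fun n : ℕ => Dseq δ T x m 0 / n + Dseq δ T x 1 m) atTop
        (𝓝 (0 + Dseq δ T x 1 m)) :=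
      (tendsto_const_div_atTop_nhds_zero_nat _).add tendsto_const_nhds
    have hle : ∀ᶠ n : ℕ in atTop, δ x (T^[n] x) / n ≤ Dseq δ T x m 0 / n + Dseq δ T x 1 m := by
      filter_upwards [eventually_ge_atTop (max m 1)] with n hn
      have hm : m ≤ n := le_trans (le_max_left _ _) hn
      have h1 : 1 ≤ n := le_trans (le_max_right _ _) hn
      have hn' : (0:ℝ) < n := by exact_mod_cast h1
      have hD0 : Dseq δ T x m 0 = δ x (T^[m] x) := by simp [Dseq]
      have hD1nn : (0:ℝ) ≤ Dseq δ T x 1 m := Dseq_nonneg δ T x hδ 1 m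
      have key : δ x (T^[n] x) ≤ Dseq δ T x m 0 + (n:ℝ) * Dseq δ T x 1 m := by
        have htr : δ x (T^[n] x) ≤ δ x (T^[m] x) + δ (T^[m] x) (T^[n] x) := htri _ _ _
        have hiter : T^[n] x = T^[n-m] (T^[m] x) := by
          rw [← Function.iterate_add_apply, show n-m+m = n by omega]
        have hpath : δ (T^[m] x) (T^[n-m] (T^[m] x)) ≤ (↑(n-m) : ℝ) * δ (T^[m] x) (T (T^[m] x)) :=
          pathBound δ T hδ hT _ _
        have hTm : Dseq δ T x 1 m = δ (T^[m] x) (T (T^[m] x)) := by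
          show δ (T^[m] x) (T^[m+1] x) = _
          rw [Function.iterate_succ_apply']
        have hle2 : ((n-m:ℕ):ℝ) ≤ (n:ℝ) := by exact_mod_cast Nat.sub_le n m
        have hmul : ((n-m:ℕ):ℝ) * Dseq δ T x 1 m ≤ (n:ℝ) * Dseq δ T x 1 m :=
          mul_le_mul_of_nonneg_right hle2 hD1nn
        rw [hiter, hD0]
        calc δ x (T^[n-m] (T^[m] x))
            ≤ δ x (T^[m] x) + δ (T^[m] x) (T^[n-m] (T^[m] x)) := htri _ _ _
          _ ≤ δ x (T^[m] x) + ((n-m:ℕ):ℝ) * Dseq δ T x 1 m := by rw [hTm]; linarith [hpath]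
          _ ≤ δ x (T^[m] x) + (n:ℝ) * Dseq δ T x 1 m := by linarith
      calc δ x (T^[n] x) / n ≤ (Dseq δ T x m 0 + (n:ℝ) * Dseq δ T x 1 m) / n :=
            (div_le_div_iff_of_pos_right hn').mpr key
        _ = Dseq δ T x m 0 / n + Dseq δ T x 1 m := by field_simp
    have := le_of_tendsto_of_tendsto hρ hc hle
    linarith
  have hρeq : ρ = σ1 := le_antisymm hρle hρge
  -- sInf part
  have hSlb : ∀ d ∈ {d : ℝ | ∃ w : X, d = δ w (T w)}, σ1 ≤ d := by
    rintro d ⟨w, rfl⟩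
    by_contra hcon
    push_neg at hcon
    obtain ⟨N, hN⟩ := exists_nat_gt ((δ x w + δ w x) / (σ1 - δ w (T w)))
    have hN' : δ x w + δ w x < (N:ℝ) * (σ1 - δ w (T w)) := by
      rw [div_lt_iff₀ (by linarith)] at hN
      linarith
    have chain : (N:ℝ) * σ1 ≤ δ x w + (N:ℝ) * δ w (T w) + δ w x := by
      have h1 : sig δ T x N ≤ Dseq δ T x N 0 := sig_le δ T x hδ N 0
      have h2 : sig δ T x N = (N:ℝ) * σ1 := by rw [hkey N, hsig1]
      have h6 : Dseq δ T x N 0 = δ x (T^[N] x) := by simp [Dseq]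
      have h3 : δ x (T^[N] x) ≤ δ x (T^[N] w) + δ (T^[N] w) (T^[N] x) := htri _ _ _
      have h3' : δ x (T^[N] w) ≤ δ x w + δ w (T^[N] w) := htri _ _ _
      have h4 : δ w (T^[N] w) ≤ (N:ℝ) * δ w (T w) := pathBound δ T hδ hT w N
      have h5 : δ (T^[N] w) (T^[N] x) ≤ δ w x := iterNonexp δ T hT N w x
      rw [h2, h6] at h1
      linarith
    nlinarith [chain, hN']
  have hSne : Set.Nonempty {d : ℝ | ∃ w : X, d = δ w (T w)} := ⟨δ x (T x), x, rfl⟩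
  have hbddS : BddBelow {d : ℝ | ∃ w : X, d = δ w (T w)} := ⟨σ1, fun d hd => hSlb d hd⟩
  have hSinf : sInf {d : ℝ | ∃ w : X, d = δ w (T w)} = σ1 := by
    refine le_antisymm ?_ (le_csInf hSne hSlb)
    rw [← hsig1]
    show sInf _ ≤ ⨅ n, Dseq δ T x 1 n
    refine le_ciInf fun n => csInf_le hbddS ⟨T^[n] x, ?_⟩
    show Dseq δ T x 1 n = _
    simp only [Dseq]
    rw [Function.iterate_succ_apply' T n x]
  refine ⟨by rw [hSinf, hρeq], hρeq, ?_⟩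
  rw [hσkval, mul_comm, mul_div_assoc, div_self hkne, mul_one]
end

section
/- Let T be a firm non-expansive mapping of a weak metric space (X,δ) into itself. Then for every x ∈ X and every integer k ≥ 1, σ_k(x,T) = k·σ_1(x,T), where σ_j(x,T) = lim_{n→∞} δ(Tⁿx, T^{n+j}x). -/
open Filter Topology

/-!
The orbit distances `d_j(n) = δ(Tⁿx, Tⁿ⁺ʲx)` are nonincreasing in `n`, so they converge to limits
`σ_j`, and the triangle inequality gives `σ_{j+2} ≤ σ_{j+1} + σ_1`. For the reverse inequality,
argue by induction and apply firmness to the pair `(Tⁿx, Tⁿ⁺ʲ⁺¹x)`: once `σ_j = jσ_1` and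
`σ_{j+1} = (j+1)σ_1`, every term of the firmness inequality has a known limit except
`δ(Tⁿx, Tⁿ⁺ʲ⁺²x)`, and `q + r + s + 2t ≤ 1` forces `t · ((j+2)σ_1 - δ(Tⁿx, Tⁿ⁺ʲ⁺²x)) ≤ o(1)`.
Since `t` is bounded away from `0`, `σ_{j+2} ≥ (j+2)σ_1`.
-/

section Orbit

variable {X : Type*} {δ : X → X → ℝ} {T : X → X}

def orbitDist (δ : X → X → ℝ) (T : X → X) (x : X) (j n : ℕ) : ℝ :=
  δ (T^[n] x) (T^[n + j] x)

theorem orbitDist_succ_le (hT : IsNonexpansive δ T) (x : X) (j n : ℕ) :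
    orbitDist δ T x j (n + 1) ≤ orbitDist δ T x j n := by
  unfold orbitDist
  rw [Nat.add_right_comm, Function.iterate_succ_apply', Function.iterate_succ_apply']
  exact hT _ _

theorem exists_tendsto_orbitDist (hδ : IsWeakMetric δ) (hT : IsNonexpansive δ T) (x : X) (j : ℕ) :
    ∃ σ, Tendsto (orbitDist δ T x j) atTop (𝓝 σ) :=
  ⟨_, tendsto_atTop_ciInf (antitone_nat_of_succ_le (orbitDist_succ_le hT x j))
    ⟨0, by rintro _ ⟨n, rfl⟩; exact hδ.2.1 _ _⟩⟩

theorem tendsto_orbitDist_zero (hδ : IsWeakMetric δ) (x : X) :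
    Tendsto (orbitDist δ T x 0) atTop (𝓝 0) :=
  (tendsto_congr fun n => hδ.1 (T^[n] x)).2 tendsto_const_nhds

theorem le_add_of_tendsto_orbitDist (hδ : IsWeakMetric δ) (x : X) {i j : ℕ} {a b c : ℝ}
    (ha : Tendsto (orbitDist δ T x i) atTop (𝓝 a)) (hb : Tendsto (orbitDist δ T x j) atTop (𝓝 b))
    (hc : Tendsto (orbitDist δ T x (i + j)) atTop (𝓝 c)) : c ≤ a + b := by
  refine le_of_tendsto_of_tendsto' hc (ha.add (hb.comp (tendsto_add_atTop_nat i))) fun n => ?_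
  have := hδ.2.2 (T^[n] x) (T^[n + i] x) (T^[n + i + j] x)
  simpa only [orbitDist, Function.comp_apply, Nat.add_assoc] using this

/-- In the application `a, b, c, e, g, d` are `d_{j+1}(n+1), d_{j+1}(n), d_1(n), d_1(n+j+1),
d_j(n+1), d_{j+2}(n)`; eliminating `q` through `q ≤ 1 - r - s - 2t` leaves
`t · ((j+2)σ - d) ≤ 2ε`. -/
theorem mul_sub_le_of_firm_ineq {q r s t α a b c d e g j σ ε : ℝ} (hq : 0 ≤ q) (hr : 0 ≤ r)
    (hs : 0 ≤ s) (hα : 0 ≤ α) (hαt : α ≤ t) (hsum : q + r + s + 2 * t ≤ 1) (hj : 0 ≤ j)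
    (hσ : 0 ≤ σ) (hε : 0 ≤ ε) (h : a ≤ q * b + r * c + s * e + t * (d + g))
    (ha : (j + 1) * σ - ε < a) (hb : b < (j + 1) * σ + ε) (hc : c < σ + ε) (he : e < σ + ε)
    (hg : g < j * σ + ε) :
    α * ((j + 2) * σ - d) ≤ 2 * ε := by
  have ht : 0 ≤ t := hα.trans hαt
  have key : t * ((j + 2) * σ - d) ≤ 2 * ε := by
    linarith [mul_nonneg hq (by linarith : 0 ≤ (j + 1) * σ + ε - b),
      mul_nonneg hr (by linarith : 0 ≤ σ + ε - c), mul_nonneg hs (by linarith : 0 ≤ σ + ε - e),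
      mul_nonneg ht (by linarith : 0 ≤ j * σ + ε - g),
      mul_nonneg (by linarith : 0 ≤ 1 - q - r - s - 2 * t) (by positivity : 0 ≤ (j + 1) * σ),
      mul_nonneg (by linarith : 0 ≤ r + s) (mul_nonneg hj hσ),
      mul_nonneg (by linarith : 0 ≤ 1 - q - r - s - t) hε]
  rcases le_total ((j + 2) * σ - d) 0 with hneg | hpos
  · exact (mul_nonpos_of_nonneg_of_nonpos hα hneg).trans (by positivity)
  · exact (mul_le_mul_of_nonneg_right hαt hpos).trans key

theorem orbitDist_succ_le_of_firm_ineq {q r s t : X → X → ℝ}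
    (hfirm : ∀ u v, δ (T u) (T v) ≤ q u v * δ u v + r u v * δ u (T u) + s u v * δ v (T v)
      + t u v * (δ u (T v) + δ (T u) v)) (x : X) (j n : ℕ) :
    let u := T^[n] x
    let v := T^[n + (j + 1)] x
    orbitDist δ T x (j + 1) (n + 1) ≤ q u v * orbitDist δ T x (j + 1) n
      + r u v * orbitDist δ T x 1 n + s u v * orbitDist δ T x 1 (n + (j + 1))
      + t u v * (orbitDist δ T x (j + 2) n + orbitDist δ T x j (n + 1)) := by
  have h := hfirm (T^[n] x) (T^[n + (j + 1)] x)
  simp only [orbitDist]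
  rw [show n + 1 + (j + 1) = n + (j + 1) + 1 by omega, show n + (j + 2) = n + (j + 1) + 1 by omega,
    show n + 1 + j = n + (j + 1) by omega]
  simpa only [Function.iterate_succ_apply'] using h

theorem mul_le_of_tendsto_orbitDist (hδ : IsWeakMetric δ) (hF : IsFirm δ T) (x : X) {j : ℕ}
    {σ c : ℝ} (h1 : Tendsto (orbitDist δ T x 1) atTop (𝓝 σ))
    (hj : Tendsto (orbitDist δ T x j) atTop (𝓝 (j * σ)))
    (hj1 : Tendsto (orbitDist δ T x (j + 1)) atTop (𝓝 ((j + 1) * σ)))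
    (hj2 : Tendsto (orbitDist δ T x (j + 2)) atTop (𝓝 c)) :
    (j + 2) * σ ≤ c := by
  obtain ⟨q, r, s, t, hq, hr, hs, -, ⟨α, hα, hαt⟩, hsum, hfirm⟩ := hF
  have hσ : 0 ≤ σ := ge_of_tendsto' h1 fun n => hδ.2.1 _ _
  have hdefect : ∀ ε > 0, α * ((j + 2) * σ - c) ≤ 2 * ε := by
    intro ε hε
    refine le_of_tendsto ((tendsto_const_nhds.sub hj2).const_mul α) ?_
    filter_upwards [(tendsto_order.1 (hj1.comp (tendsto_add_atTop_nat 1))).1 _ (sub_lt_self _ hε),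
      (tendsto_order.1 hj1).2 _ (lt_add_of_pos_right _ hε),
      (tendsto_order.1 h1).2 _ (lt_add_of_pos_right _ hε),
      (tendsto_order.1 (h1.comp (tendsto_add_atTop_nat (j + 1)))).2 _ (lt_add_of_pos_right _ hε),
      (tendsto_order.1 (hj.comp (tendsto_add_atTop_nat 1))).2 _ (lt_add_of_pos_right _ hε)]
      with n ha hb hc he hg
    exact mul_sub_le_of_firm_ineq (hq _ _) (hr _ _) (hs _ _) hα.le (hαt _ _) (hsum _ _)
      j.cast_nonneg hσ hε.le (orbitDist_succ_le_of_firm_ineq hfirm x j n) ha hb hc he hg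
  have hnonpos : α * ((j + 2) * σ - c) ≤ 0 :=
    le_of_forall_pos_le_add fun ε hε => by linarith [hdefect (ε / 2) (half_pos hε)]
  linarith [nonpos_of_mul_nonpos_right hnonpos hα]

theorem eq_nat_mul_of_tendsto_orbitDist (hδ : IsWeakMetric δ) (hF : IsFirm δ T) (x : X)
    {σ : ℕ → ℝ} (hσ : ∀ j, Tendsto (orbitDist δ T x j) atTop (𝓝 (σ j))) (j : ℕ) :
    σ j = j * σ 1 := by
  have hσ0 : σ 0 = 0 := tendsto_nhds_unique (hσ 0) (tendsto_orbitDist_zero hδ x)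
  suffices h : ∀ j, σ j = j * σ 1 ∧ σ (j + 1) = (j + 1) * σ 1 from (h j).1
  intro j
  induction j with
  | zero => simp [hσ0]
  | succ j ih =>
    obtain ⟨hj, hj1⟩ := ih
    have hle : σ (j + 2) ≤ σ (j + 1) + σ 1 := le_add_of_tendsto_orbitDist hδ x (hσ _) (hσ 1) (hσ _)
    have hge : (j + 2) * σ 1 ≤ σ (j + 2) :=
      mul_le_of_tendsto_orbitDist hδ hF x (hσ 1) (hj ▸ hσ j) (hj1 ▸ hσ (j + 1)) (hσ _)
    push_cast
    constructor <;> linarith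

end Orbit

theorem stmt10_general {X : Type*} (δ : X → X → ℝ) (T : X → X)
    (hδ : IsWeakMetric δ) (hT : IsNonexpansive δ T) (hF : IsFirm δ T)
    (x : X) (k : ℕ) (σ1 σk : ℝ)
    (hσ1 : Tendsto (fun n : ℕ => δ (T^[n] x) (T^[n + 1] x)) atTop (nhds σ1))
    (hσk : Tendsto (fun n : ℕ => δ (T^[n] x) (T^[n + k] x)) atTop (nhds σk)) :
    σk = k * σ1 := by
  choose σ hσ using exists_tendsto_orbitDist hδ hT x
  rw [tendsto_nhds_unique hσk (hσ k), tendsto_nhds_unique hσ1 (hσ 1)]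
  exact eq_nat_mul_of_tendsto_orbitDist hδ hF x hσ k

theorem stmt10 {X : Type*} (δ : X → X → ℝ) (T : X → X)
    (hδ : IsWeakMetric δ) (hT : IsNonexpansive δ T) (hF : IsFirm δ T)
    (x : X) (k : ℕ) (hk : 1 ≤ k) (σ1 σk : ℝ)
    (hσ1 : Tendsto (fun n : ℕ => δ (T^[n] x) (T^[n + 1] x)) atTop (nhds σ1))
    (hσk : Tendsto (fun n : ℕ => δ (T^[n] x) (T^[n + k] x)) atTop (nhds σk)) :
    σk = k * σ1 :=
  stmt10_general δ T hδ hT hF x k σ1 σk hσ1 hσk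
end

section
/- Let T be a firm non-expansive mapping of a weak metric space (X,δ) into itself. Then the asymptotic step size equals the escape rate: for every x ∈ X, lim_{n→∞} δ(Tⁿx, T^{n+1}x) = lim_{n→∞} δ(x, Tⁿx)/n. -/
/-!
Along two orbits of a non-expansive map the distance `δ (T^[k] x) (T^[k] y)` decreases, so it has
a limit `ℓ(x, y) = asymDist δ T x y`, which is invariant under `T`. Passing to the limit in the
firmness inequality along the orbits of `x` and `y` gives
`2 ℓ(x, y) ≤ ℓ(x, T y) + ℓ(T x, y)` whenever both step sizes `ℓ(x, T x)`, `ℓ(y, T y)` are at most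
`ℓ(x, y)`. Applied to `y = T^[m+1] x`, this says that `m ↦ ℓ(x, T^[m] x)` has increments at least
`σ = ℓ(x, T x)`, the asymptotic step size. Hence `n σ ≤ δ(x, T^[n] x)`, while the triangle
inequality and Cesàro averaging give the reverse inequality in the limit.
-/

open Filter Topology

noncomputable def asymDist {X : Type*} (δ : X → X → ℝ) (T : X → X) (x y : X) : ℝ :=
  ⨅ k : ℕ, δ (T^[k] x) (T^[k] y)

section

variable {X : Type*} {δ : X → X → ℝ} {T : X → X}

theorem IsNonexpansive.antitone_dist_iterate (hT : IsNonexpansive δ T) (x y : X) :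
    Antitone fun k : ℕ => δ (T^[k] x) (T^[k] y) :=
  antitone_nat_of_succ_le fun k => by
    simpa only [Function.iterate_succ_apply'] using hT (T^[k] x) (T^[k] y)

theorem tendsto_asymDist (hδ : IsWeakMetric δ) (hT : IsNonexpansive δ T) (x y : X) :
    Tendsto (fun k : ℕ => δ (T^[k] x) (T^[k] y)) atTop (𝓝 (asymDist δ T x y)) :=
  tendsto_atTop_ciInf (hT.antitone_dist_iterate x y) ⟨0, by rintro _ ⟨k, rfl⟩; exact hδ.2.1 _ _⟩

theorem asymDist_le_dist_iterate (hδ : IsWeakMetric δ) (hT : IsNonexpansive δ T) (x y : X)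
    (k : ℕ) : asymDist δ T x y ≤ δ (T^[k] x) (T^[k] y) :=
  (hT.antitone_dist_iterate x y).le_of_tendsto (tendsto_asymDist hδ hT x y) k

theorem asymDist_nonneg (hδ : IsWeakMetric δ) (x y : X) : 0 ≤ asymDist δ T x y :=
  le_ciInf fun _ => hδ.2.1 _ _

theorem asymDist_self (hδ : IsWeakMetric δ) (x : X) : asymDist δ T x x = 0 := by
  simp [asymDist, hδ.1]

theorem asymDist_iterate (hδ : IsWeakMetric δ) (hT : IsNonexpansive δ T) (n : ℕ) (x y : X) :
    asymDist δ T (T^[n] x) (T^[n] y) = asymDist δ T x y := by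
  refine tendsto_nhds_unique (tendsto_asymDist hδ hT _ _) ?_
  simpa only [Function.comp_def, ← Function.iterate_add_apply] using
    (tendsto_asymDist hδ hT x y).comp (tendsto_add_atTop_nat n)

theorem dist_iterate_le_sum (hδ : IsWeakMetric δ) (x : X) (n : ℕ) :
    δ x (T^[n] x) ≤ ∑ i ∈ Finset.range n, δ (T^[i] x) (T^[i + 1] x) := by
  induction n with
  | zero => simp [hδ.1]
  | succ n ih =>
    rw [Finset.sum_range_succ]
    linarith [hδ.2.2 x (T^[n] x) (T^[n + 1] x)]

/-- The firmness inequality with errors `α * ε`, solved for the cross term `d + d'`. -/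
theorem two_mul_le_of_firm_perturbed {q r s t α ℓ σ₁ σ₂ d d' ε : ℝ} (hr : 0 ≤ r) (hs : 0 ≤ s)
    (hα : 0 < α) (ht : α ≤ t) (hsum : q + r + s + 2 * t ≤ 1) (hε : 0 ≤ ε) (hℓ : 0 ≤ ℓ) (h₁ : σ₁ ≤ ℓ) (h₂ : σ₂ ≤ ℓ)
    (h : ℓ ≤ q * (ℓ + α * ε) + r * (σ₁ + α * ε) + s * (σ₂ + α * ε) + t * (d + (d' + α * ε))) :
    2 * ℓ ≤ d + (d' + ε) := by
  have hcross : t * (2 * ℓ - d - d') ≤ α * ε := by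
    nlinarith [mul_nonneg hr (sub_nonneg.2 h₁), mul_nonneg hs (sub_nonneg.2 h₂),
      mul_nonneg (mul_nonneg hα.le hε) (show 0 ≤ 1 - q - r - s - t by linarith)]
  by_contra! hlt
  nlinarith [mul_le_mul_of_nonneg_right ht (show 0 ≤ 2 * ℓ - d - d' by linarith)]

theorem IsFirm.two_mul_asymDist_le (hδ : IsWeakMetric δ) (hT : IsNonexpansive δ T)
    (hF : IsFirm δ T) {x y : X} (hx : asymDist δ T x (T x) ≤ asymDist δ T x y)
    (hy : asymDist δ T y (T y) ≤ asymDist δ T x y) :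
    2 * asymDist δ T x y ≤ asymDist δ T x (T y) + asymDist δ T (T x) y := by
  obtain ⟨q, r, s, t, hq, hr, hs, ht, ⟨α, hα, hαt⟩, hsum, hfirm⟩ := hF
  refine le_of_forall_pos_le_add fun ε hε => ?_
  have hαε : 0 < α * ε := mul_pos hα hε
  have hlim := fun u v => tendsto_asymDist (T := T) hδ hT u v
  have hev : ∀ᶠ k in atTop, 2 * asymDist δ T x y ≤
      δ (T^[k] x) (T^[k] (T y)) + (asymDist δ T (T x) y + ε) := by
    filter_upwards [(hlim x y).eventually_le_const (lt_add_of_pos_right _ hαε),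
      (hlim x (T x)).eventually_le_const (lt_add_of_pos_right _ hαε),
      (hlim y (T y)).eventually_le_const (lt_add_of_pos_right _ hαε),
      (hlim (T x) y).eventually_le_const (lt_add_of_pos_right _ hαε)]
      with k hxy hxTx hyTy hTxy
    set u := T^[k] x
    set v := T^[k] y
    have hk := hfirm u v
    simp only [u, v, Function.Commute.self_iterate T k _] at hk
    refine two_mul_le_of_firm_perturbed (hr u v) (hs u v) hα (hαt u v) (hsum u v) hε.le
      (asymDist_nonneg hδ _ _) hx hy ((asymDist_le_dist_iterate hδ hT x y (k + 1)).trans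
        (hk.trans ?_))
    gcongr
    exacts [hq u v, hr u v, hs u v, ht u v]
  linarith [ge_of_tendsto ((hlim x (T y)).add_const _) hev]

theorem IsFirm.asymDist_iterate_add_le (hδ : IsWeakMetric δ) (hT : IsNonexpansive δ T)
    (hF : IsFirm δ T) (x : X) (m : ℕ) :
    asymDist δ T x (T^[m] x) + asymDist δ T x (T x) ≤ asymDist δ T x (T^[m + 1] x) := by
  induction m with
  | zero => simp [asymDist_self hδ]
  | succ m ih =>
    have hstep : asymDist δ T (T^[m + 1] x) (T (T^[m + 1] x)) = asymDist δ T x (T x) := by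
      rw [Function.Commute.self_iterate T, asymDist_iterate hδ hT]
    have hback : asymDist δ T (T x) (T^[m + 1] x) = asymDist δ T x (T^[m] x) := by
      rw [Function.iterate_succ_apply', ← asymDist_iterate hδ hT 1 x]; rfl
    have hσ : asymDist δ T x (T x) ≤ asymDist δ T x (T^[m + 1] x) := by
      linarith [asymDist_nonneg (T := T) hδ x (T^[m] x)]
    have hconv := hF.two_mul_asymDist_le hδ hT hσ (hstep.trans_le hσ)
    rw [hback, ← Function.iterate_succ_apply' T (m + 1)] at hconv
    linarith

theorem IsFirm.nat_mul_asymDist_le (hδ : IsWeakMetric δ) (hT : IsNonexpansive δ T)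
    (hF : IsFirm δ T) (x : X) (n : ℕ) :
    n * asymDist δ T x (T x) ≤ asymDist δ T x (T^[n] x) := by
  induction n with
  | zero => simp [asymDist_self hδ]
  | succ n ih =>
    push_cast
    linarith [hF.asymDist_iterate_add_le hδ hT x n]

end

theorem stmt11 {X : Type*} (δ : X → X → ℝ) (T : X → X)
    (hδ : IsWeakMetric δ) (hT : IsNonexpansive δ T) (hF : IsFirm δ T)
    (x : X) (ρ σ1 : ℝ)
    (hρ : Tendsto (fun n : ℕ => δ x (T^[n] x) / n) atTop (nhds ρ))
    (hσ1 : Tendsto (fun n : ℕ => δ (T^[n] x) (T^[n + 1] x)) atTop (nhds σ1)) :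
    σ1 = ρ := by
  have hσ : σ1 = asymDist δ T x (T x) := tendsto_nhds_unique hσ1 (tendsto_asymDist hδ hT x (T x))
  have hσρ : σ1 ≤ ρ := by
    refine ge_of_tendsto hρ ?_
    filter_upwards [eventually_gt_atTop 0] with n hn
    rw [le_div_iff₀ (by exact_mod_cast hn), mul_comm, hσ]
    exact (hF.nat_mul_asymDist_le hδ hT x n).trans (asymDist_le_dist_iterate hδ hT x _ 0)
  have hρσ : ρ ≤ σ1 := by
    refine le_of_tendsto_of_tendsto' hρ hσ1.cesaro fun n => ?_
    rw [div_eq_inv_mul]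
    exact mul_le_mul_of_nonneg_left (dist_iterate_le_sum hδ x n) (by positivity)
  exact le_antisymm hσρ hρσ
end

section
/- A non-expansive self-mapping T of a weak metric space (X,δ) is firm if and only if inf { τ(x,y) : x,y ∈ X, A(x,y) < δ(Tx,Ty) } > 0, where M(x,y) = max(δ(x,y), δ(x,Tx), δ(y,Ty)), A(x,y) = (δ(x,Ty)+δ(Tx,y))/2, and τ(x,y) = (M(x,y) − δ(Tx,Ty)) / (2(M(x,y) − A(x,y))). -/
open Filter Topology

/-
With `M` and `A` as in the statement, firmness amounts to a single constant `0 < t ≤ 1/2` with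
`δ(Tx,Ty) ≤ (1 - 2t) M(x,y) + 2t A(x,y)` for all `x, y`. Given such a `t`, put all of the weight
`1 - 2t` on whichever of the three distances realises `M`. Conversely the weights of a firm `T` give
this bound with `t = t(x,y)`, and it persists when `t` is lowered to a positive lower bound `α`:
the right-hand side decreases in `t` when `A ≤ M`, and is at least `M ≥ δ(Tx,Ty)` when `A > M`. Finally, when
`A(x,y) < δ(Tx,Ty) ≤ M(x,y)` the bound is a linear inequality in `t` equivalent to `t ≤ τ(x,y)`,
and when `δ(Tx,Ty) ≤ A(x,y)` it holds for every `t ∈ [0, 1/2]`.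
-/

lemma exists_weights_mul_max_eq (c u v w : ℝ) (hc : 0 ≤ c) :
    ∃ q r s : ℝ, 0 ≤ q ∧ 0 ≤ r ∧ 0 ≤ s ∧ q + r + s = c ∧
      c * max u (max v w) = q * u + r * v + s * w := by
  rcases max_choice u (max v w) with h | h
  · exact ⟨c, 0, 0, hc, le_rfl, le_rfl, by ring, by rw [h]; ring⟩
  · rcases max_choice v w with h' | h' <;> rw [h, h']
    · exact ⟨0, c, 0, le_rfl, hc, le_rfl, by ring, by ring⟩
    · exact ⟨0, 0, c, le_rfl, le_rfl, hc, by ring, by ring⟩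

lemma le_sub_div_two_mul_sub_iff {a d m t : ℝ} (had : a < d) (hdm : d ≤ m) :
    t ≤ (m - d) / (2 * (m - a)) ↔ d ≤ (1 - 2 * t) * m + 2 * t * a := by
  rw [le_div_iff₀ (by linarith)]
  constructor <;> intro h <;> linarith

section Firm

variable {X : Type*} (δ : X → X → ℝ) (T : X → X)

noncomputable def dispMax (x y : X) : ℝ := max (δ x y) (max (δ x (T x)) (δ y (T y)))

noncomputable def crossMean (x y : X) : ℝ := (δ x (T y) + δ (T x) y) / 2

noncomputable def firmRatio (x y : X) : ℝ :=
  (dispMax δ T x y - δ (T x) (T y)) / (2 * (dispMax δ T x y - crossMean δ T x y))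

def IsFirmWith (t : ℝ) : Prop :=
  ∀ x y, δ (T x) (T y) ≤ (1 - 2 * t) * dispMax δ T x y + 2 * t * crossMean δ T x y

lemma le_dispMax (x y : X) : δ x y ≤ dispMax δ T x y := le_max_left _ _

variable {δ T}

lemma IsNonexpansive.map_le_dispMax (hT : IsNonexpansive δ T) (x y : X) :
    δ (T x) (T y) ≤ dispMax δ T x y :=
  (hT x y).trans (le_dispMax δ T x y)

lemma isFirm_of_isFirmWith {t : ℝ} (ht : 0 < t) (ht' : 2 * t ≤ 1) (h : IsFirmWith δ T t) :
    IsFirm δ T := by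
  choose q r s hq hr hs hsum heq using fun x y =>
    exists_weights_mul_max_eq (1 - 2 * t) (δ x y) (δ x (T x)) (δ y (T y)) (by linarith)
  refine ⟨q, r, s, fun _ _ => t, hq, hr, hs, fun _ _ => ht.le, ⟨t, ht, fun _ _ => le_rfl⟩,
    fun x y => by linarith [hsum x y], fun x y => ?_⟩
  have hxy := h x y
  rw [dispMax, heq, crossMean] at hxy
  linarith

lemma IsFirm.exists_isFirmWith (hδ : ∀ x y, 0 ≤ δ x y) (hT : IsNonexpansive δ T)
    (hF : IsFirm δ T) : ∃ t > 0, IsFirmWith δ T t := by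
  obtain ⟨q, r, s, t, hq, hr, hs, -, ⟨α, hα, hαt⟩, hsum, hineq⟩ := hF
  refine ⟨α, hα, fun x y => ?_⟩
  have hM : 0 ≤ dispMax δ T x y := (hδ x y).trans (le_dispMax δ T x y)
  have hpointwise : δ (T x) (T y) ≤
      (1 - 2 * t x y) * dispMax δ T x y + 2 * t x y * crossMean δ T x y := by
    have h1 : δ x (T x) ≤ dispMax δ T x y := le_max_of_le_right (le_max_left _ _)
    have h2 : δ y (T y) ≤ dispMax δ T x y := le_max_of_le_right (le_max_right _ _)
    have hqrs : (q x y + r x y + s x y) * dispMax δ T x y ≤ (1 - 2 * t x y) * dispMax δ T x y :=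
      mul_le_mul_of_nonneg_right (by linarith [hsum x y]) hM
    have hA : 2 * t x y * crossMean δ T x y = t x y * (δ x (T y) + δ (T x) y) := by
      rw [crossMean]; ring
    linarith [hineq x y, mul_le_mul_of_nonneg_left (le_dispMax δ T x y) (hq x y),
      mul_le_mul_of_nonneg_left h1 (hr x y), mul_le_mul_of_nonneg_left h2 (hs x y)]
  rcases le_or_gt (crossMean δ T x y) (dispMax δ T x y) with hAM | hMA
  · linarith [mul_le_mul_of_nonneg_right (hαt x y) (sub_nonneg.2 hAM)]
  · linarith [hT.map_le_dispMax x y, mul_le_mul_of_nonneg_left hMA.le hα.le]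

lemma IsFirmWith.le_firmRatio (hT : IsNonexpansive δ T) {t : ℝ} (h : IsFirmWith δ T t)
    {x y : X} (hA : crossMean δ T x y < δ (T x) (T y)) : t ≤ firmRatio δ T x y :=
  (le_sub_div_two_mul_sub_iff hA (hT.map_le_dispMax x y)).2 (h x y)

lemma isFirmWith_of_le_firmRatio (hT : IsNonexpansive δ T) {t : ℝ} (ht : 0 ≤ t) (ht' : 2 * t ≤ 1)
    (h : ∀ x y, crossMean δ T x y < δ (T x) (T y) → t ≤ firmRatio δ T x y) :
    IsFirmWith δ T t := by
  intro x y
  rcases lt_or_ge (crossMean δ T x y) (δ (T x) (T y)) with hA | hA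
  · exact (le_sub_div_two_mul_sub_iff hA (hT.map_le_dispMax x y)).1 (h x y hA)
  · have hdM := hT.map_le_dispMax x y
    linarith [mul_nonneg (by linarith : 0 ≤ 1 - 2 * t) (sub_nonneg.2 hdM),
      mul_nonneg ht (sub_nonneg.2 hA)]

end Firm

theorem stmt14 {X : Type*} (δ : X → X → ℝ) (T : X → X)
    (hδ : IsWeakMetric δ) (hT : IsNonexpansive δ T)
    (M A τ : X → X → ℝ)
    (hM : ∀ x y, M x y = max (δ x y) (max (δ x (T x)) (δ y (T y))))
    (hA : ∀ x y, A x y = (δ x (T y) + δ (T x) y) / 2)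
    (hτ : ∀ x y, τ x y = (M x y - δ (T x) (T y)) / (2 * (M x y - A x y))) :
    IsFirm δ T ↔ ∃ c > 0, ∀ x y : X, A x y < δ (T x) (T y) → c ≤ τ x y := by
  obtain rfl : M = dispMax δ T := funext₂ hM
  obtain rfl : A = crossMean δ T := funext₂ hA
  obtain rfl : τ = firmRatio δ T := funext₂ hτ
  constructor
  · intro hF
    obtain ⟨t, ht, hFt⟩ := hF.exists_isFirmWith hδ.2.1 hT
    exact ⟨t, ht, fun x y => hFt.le_firmRatio hT⟩
  · rintro ⟨c, hc, hcτ⟩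
    have ht : 0 < min c (1 / 2) := lt_min hc one_half_pos
    have ht' : 2 * min c (1 / 2) ≤ 1 := by linarith [min_le_right c (1 / 2)]
    exact isFirm_of_isFirmWith ht ht' (isFirmWith_of_le_firmRatio hT ht.le ht'
      fun x y hxy => (min_le_left _ _).trans (hcτ x y hxy))
end

section
/- Let α, β > 0 and equip ℝ with the asymmetric norm ‖x‖ = max(−αx, βx), giving the weak metric δ(x,y) = ‖y−x‖. Every fixed-point-free non-expansive mapping T : ℝ → ℝ with respect to δ is firm. -/
open Filter Topology

theorem stmt15 (α β : ℝ) (hα : 0 < α) (hβ : 0 < β) (T : ℝ → ℝ)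
    (hT : IsNonexpansive (fun x y : ℝ => max (-α * (y - x)) (β * (y - x))) T)
    (hfree : ∀ x : ℝ, T x ≠ x) :
    IsFirm (fun x y : ℝ => max (-α * (y - x)) (β * (y - x))) T := by
  have hmin : 0 < min α β := lt_min hα hβ
  have key : ∀ x y, min α β * |T x - T y| ≤ max α β * |x - y| := by
    intro x y
    have h1 := hT y x
    simp only at h1
    have l1 : -α * (T x - T y) ≤ max (-α * (x - y)) (β * (x - y)) :=
      le_trans (le_max_left _ _) h1
    have l2 : β * (T x - T y) ≤ max (-α * (x - y)) (β * (x - y)) :=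
      le_trans (le_max_right _ _) h1
    rcases abs_cases (T x - T y) with ⟨e1, s1⟩ | ⟨e1, s1⟩ <;>
      rcases abs_cases (x - y) with ⟨e2, s2⟩ | ⟨e2, s2⟩ <;>
      rcases max_cases (-α * (x - y)) (β * (x - y)) with ⟨e3, s3⟩ | ⟨e3, s3⟩ <;>
      rw [e1, e2] <;> rw [e3] at l1 l2 <;>
      nlinarith [min_le_left α β, min_le_right α β, le_max_left α β, le_max_right α β,
        mul_nonneg (le_of_lt hα) (abs_nonneg (x - y)), mul_nonneg (le_of_lt hβ) (abs_nonneg (x - y))]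
  have hcont : Continuous T := by
    have h2 : LipschitzWith ⟨max α β / min α β, by positivity⟩ T := by
      apply LipschitzWith.of_dist_le_mul
      intro x y
      simp only [Real.dist_eq, NNReal.coe_mk]
      change |T x - T y| ≤ max α β / min α β * |x - y|
      rw [div_mul_eq_mul_div, le_div_iff₀ hmin]
      calc |T x - T y| * min α β = min α β * |T x - T y| := by ring
        _ ≤ max α β * |x - y| := key x y
    exact h2.continuous
  have hsign : (∀ x, x < T x) ∨ (∀ x, T x < x) := by
    by_contra h
    push_neg at h
    obtain ⟨⟨x₀, hx₀⟩, ⟨x₁, hx₁⟩⟩ := h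
    have h0 : T x₀ - x₀ < 0 := sub_neg.2 (lt_of_le_of_ne hx₀ (hfree x₀))
    have h1' : 0 < T x₁ - x₁ := sub_pos.2 (lt_of_le_of_ne hx₁ (Ne.symm (hfree x₁)))
    have hg : Continuous fun x => T x - x := hcont.sub continuous_id
    have hm : (0:ℝ) ∈ Set.uIcc (T x₀ - x₀) (T x₁ - x₁) :=
      Set.mem_uIcc.2 (Or.inl ⟨h0.le, h1'.le⟩)
    obtain ⟨c, -, hc⟩ := intermediate_value_uIcc (a := x₀) (b := x₁) hg.continuousOn hm
    exact hfree c (by simpa using sub_eq_zero.mp hc)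
  refine ⟨fun _ _ => 0, fun _ _ => 0, fun _ _ => 0, fun _ _ => 1/2,
    fun _ _ => le_refl 0, fun _ _ => le_refl 0, fun _ _ => le_refl 0,
    fun _ _ => by norm_num, ⟨1/2, by norm_num, fun _ _ => le_refl _⟩,
    fun _ _ => by norm_num, ?_⟩
  intro x y
  simp only
  have h1 := hT x y
  have h2 := hT y x
  simp only at h1 h2
  have lb1 := le_max_left (-α * (T y - x)) (β * (T y - x))
  have lb2 := le_max_right (-α * (T y - x)) (β * (T y - x))
  have lb3 := le_max_left (-α * (y - T x)) (β * (y - T x))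
  have lb4 := le_max_right (-α * (y - T x)) (β * (y - T x))
  rcases hsign with hs | hs
  · have hx' : x < T x := hs x
    have hy' : y < T y := hs y
    have p1 : 0 < α * (T x - x) := mul_pos hα (by linarith)
    have p2 : 0 < β * (T x - x) := mul_pos hβ (by linarith)
    have p3 : 0 < α * (T y - y) := mul_pos hα (by linarith)
    have p4 : 0 < β * (T y - y) := mul_pos hβ (by linarith)
    rcases le_total x y with hxy | hxy
    · have d1 : 0 ≤ α * (y - x) := mul_nonneg hα.le (by linarith)
      have d2 : 0 ≤ β * (y - x) := mul_nonneg hβ.le (by linarith)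
      rw [max_eq_right (by linarith : -α * (y - x) ≤ β * (y - x)), max_le_iff] at h1
      rw [max_eq_left (by linarith [mul_nonneg hα.le (sub_nonneg.2 hxy), mul_nonneg hβ.le (sub_nonneg.2 hxy)] : β * (x - y) ≤ -α * (x - y)), max_le_iff] at h2
      have e2 : -α * (x - y) = α * (y - x) := by ring
      rw [e2] at h2
      exact max_le (by linarith [h1.1, h1.2, h2.1, h2.2]) (by linarith [h1.1, h1.2, h2.1, h2.2])
    · have d1 : 0 ≤ α * (x - y) := mul_nonneg hα.le (by linarith)
      have d2 : 0 ≤ β * (x - y) := mul_nonneg hβ.le (by linarith)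
      rw [max_eq_left (by linarith [mul_nonneg hα.le (sub_nonneg.2 hxy), mul_nonneg hβ.le (sub_nonneg.2 hxy)] : β * (y - x) ≤ -α * (y - x)), max_le_iff] at h1
      rw [max_eq_right (by linarith : -α * (x - y) ≤ β * (x - y)), max_le_iff] at h2
      have e1 : -α * (y - x) = α * (x - y) := by ring
      rw [e1] at h1
      exact max_le (by linarith [h1.1, h1.2, h2.1, h2.2]) (by linarith [h1.1, h1.2, h2.1, h2.2])
  · have hx' : T x < x := hs x
    have hy' : T y < y := hs y
    have p1 : 0 < α * (x - T x) := mul_pos hα (by linarith)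
    have p2 : 0 < β * (x - T x) := mul_pos hβ (by linarith)
    have p3 : 0 < α * (y - T y) := mul_pos hα (by linarith)
    have p4 : 0 < β * (y - T y) := mul_pos hβ (by linarith)
    rcases le_total x y with hxy | hxy
    · have d1 : 0 ≤ α * (y - x) := mul_nonneg hα.le (by linarith)
      have d2 : 0 ≤ β * (y - x) := mul_nonneg hβ.le (by linarith)
      rw [max_eq_right (by linarith : -α * (y - x) ≤ β * (y - x)), max_le_iff] at h1
      rw [max_eq_left (by linarith [mul_nonneg hα.le (sub_nonneg.2 hxy), mul_nonneg hβ.le (sub_nonneg.2 hxy)] : β * (x - y) ≤ -α * (x - y)), max_le_iff] at h2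
      have e2 : -α * (x - y) = α * (y - x) := by ring
      rw [e2] at h2
      exact max_le (by linarith [h1.1, h1.2, h2.1, h2.2]) (by linarith [h1.1, h1.2, h2.1, h2.2])
    · have d1 : 0 ≤ α * (x - y) := mul_nonneg hα.le (by linarith)
      have d2 : 0 ≤ β * (x - y) := mul_nonneg hβ.le (by linarith)
      rw [max_eq_left (by linarith [mul_nonneg hα.le (sub_nonneg.2 hxy), mul_nonneg hβ.le (sub_nonneg.2 hxy)] : β * (y - x) ≤ -α * (y - x)), max_le_iff] at h1
      rw [max_eq_right (by linarith : -α * (x - y) ≤ β * (x - y)), max_le_iff] at h2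
      have e1 : -α * (y - x) = α * (x - y) := by ring
      rw [e1] at h1
      exact max_le (by linarith [h1.1, h1.2, h2.1, h2.2]) (by linarith [h1.1, h1.2, h2.1, h2.2])
end
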